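/- arXiv:2104.14019 — 3 statements merged into one kernel-verified Lean document; each statement's English description precedes it below -/
import Mathlib

section
/- Let g, h : B* → ℕ be functions and α, β ∈ ℕ. If g and h are each computable by a k-blind bimachine, then the function w ↦ α·g(w) + β·h(w) is computable by a k-blind bimachine. -/
open scoped BigOperators

/-- Semantics of a bimachine with morphism `μ` and output function `lam`:
the sum over all positions of `lam` applied to the `μ`-image of the strict
prefix, the current letter, and the `μ`-image of the strict suffix. -/
def bimSem {A M : Type} [Monoid M] (μ : A → M) (lam : M → A → M → ℕ)
    (w : List A) : ℕ :=
  ∑ i : Fin w.length,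
    lam (((w.take i.1).map μ).prod) (w.get i) (((w.drop (i.1 + 1)).map μ).prod)

/-- `BlindComputable A k f` : the function `f : List A → ℕ` is computable by a
`k`-blind bimachine.  A `0`-blind bimachine is an ordinary bimachine; a
`(k+1)`-blind bimachine selects at each position an external function computed
by a `k`-blind bimachine and applies it to the whole input word. -/
def BlindComputable (A : Type) : ℕ → (List A → ℕ) → Prop
  | 0, f => ∃ (M : Type) (_ : Monoid M) (_ : Finite M) (μ : A → M)
      (lam : M → A → M → ℕ), ∀ w, f w = bimSem μ lam w
  | k + 1, f => ∃ (M : Type) (_ : Monoid M) (_ : Finite M) (μ : A → M)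
      (ext : M → A → M → (List A → ℕ)),
      (∀ m a n, BlindComputable A k (ext m a n)) ∧
      ∀ w : List A, f w = ∑ i : Fin w.length,
        ext (((w.take i.1).map μ).prod) (w.get i)
          (((w.drop (i.1 + 1)).map μ).prod) w

lemma pair_prod {A M N : Type} [Monoid M] [Monoid N] (μ : A → M) (ν : A → N)
    (l : List A) :
    (l.map (fun a => ((μ a, ν a) : M × N))).prod = ((l.map μ).prod, (l.map ν).prod) := by
  induction l with
  | nil => simp [Prod.ext_iff]
  | cons a l ih => simp [ih, Prod.ext_iff]

theorem blind_closed_linear_combination {B : Type} (k : ℕ) (α β : ℕ)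
    (g h : List B → ℕ) (hg : BlindComputable B k g) (hh : BlindComputable B k h) :
    BlindComputable B k (fun w => α * g w + β * h w) := by
  induction k generalizing g h with
  | zero =>
    obtain ⟨M, iM, fM, μ, lam, hlam⟩ := hg
    obtain ⟨N, iN, fN, ν, lam', hlam'⟩ := hh
    refine ⟨M × N, inferInstance, inferInstance, fun a => (μ a, ν a),
      fun p a q => α * lam p.1 a q.1 + β * lam' p.2 a q.2, fun w => ?_⟩
    simp only [hlam, hlam', bimSem, pair_prod, Finset.mul_sum, ← Finset.sum_add_distrib]
  | succ k ih =>
    obtain ⟨M, iM, fM, μ, ext, hext, hsem⟩ := hg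
    obtain ⟨N, iN, fN, ν, ext', hext', hsem'⟩ := hh
    refine ⟨M × N, inferInstance, inferInstance, fun a => (μ a, ν a),
      fun p a q w => α * ext p.1 a q.1 w + β * ext' p.2 a q.2 w,
      fun p a q => ih _ _ (hext _ _ _) (hext' _ _ _), fun w => ?_⟩
    simp only [hsem, hsem', pair_prod, Finset.mul_sum, ← Finset.sum_add_distrib]
end

section
/- Let pro be a bitype production function arising from a 1-marble bimachine (or abstractly, any function pro : M × A⁺ × M × A⁺ × M → ℕ of the form pro(m⟨u⟩m'⟨v⟩m'') = Σ_{1≤i≤|u|, 1≤j≤|v|} Φ(i,j) where Φ(i,j) depends only on (m·μ(u[1:i−1]), u[i], μ(u[i+1:|u|])·m'·μ(v[1:j]), m·μ(u)·m'·μ(v[1:j−1]), v[j], μ(v[j+1:|v|])·m'')). Let m, m', m'' ∈ M, v, w ∈ A⁺ with e := μ(v) idempotent. Then for all Z ≥ 2: pro(m⟨v^Z⟩m'⟨w⟩m'') = pro(m⟨v⟩(e·m')⟨w⟩m'') + pro((m·e)⟨v⟩m'⟨w⟩m'') + (Z−2)·pro((m·e)⟨v⟩(e·m')⟨w⟩m'').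 -/
open scoped BigOperators

/-- Product of the `μ`-images of the letters of a word. -/
def prodμ {A M : Type} [Monoid M] (μ : A → M) (w : List A) : M := (w.map μ).prod

/-- Production of the bitype `m⟨u⟩m'⟨v⟩m''` for a 1-marble bimachine with
morphism `μ`, external-function selector `lam : M × A × M → F` and outputs
`lamf : F → (M × A × M → ℕ)`:
`pro(m⟨u⟩m'⟨v⟩m'') = Σ_{i,j} Φ(i,j)` where
`Φ(i,j) = lamf f_j (m·μ(u[1:i-1])) u[i] (μ(u[i+1:|u|])·m'·μ(v[1:j]))` and
`f_j = lam (m·μ(u)·m'·μ(v[1:j-1])) v[j] (μ(v[j+1:|v|])·m'')`. -/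
def proBt {A M F : Type} [Monoid M] (μ : A → M) (lam : M → A → M → F)
    (lamf : F → M → A → M → ℕ)
    (m : M) (u : List A) (m' : M) (v : List A) (m'' : M) : ℕ :=
  ∑ i : Fin u.length, ∑ j : Fin v.length,
    lamf (lam (m * prodμ μ u * m' * prodμ μ (v.take j.1)) (v.get j)
            (prodμ μ (v.drop (j.1 + 1)) * m''))
      (m * prodμ μ (u.take i.1)) (u.get i)
      (prodμ μ (u.drop (i.1 + 1)) * m' * prodμ μ (v.take (j.1 + 1)))

lemma sum_split {A M : Type} [Monoid M] (μ : A → M) (f : M → A → M → ℕ) :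
    ∀ (u₁ : List A) (m n : M) (u₂ : List A),
    (∑ i : Fin (u₁ ++ u₂).length,
        f (m * prodμ μ ((u₁ ++ u₂).take i.1)) ((u₁ ++ u₂).get i)
          (prodμ μ ((u₁ ++ u₂).drop (i.1 + 1)) * n)) =
      (∑ i : Fin u₁.length,
        f (m * prodμ μ (u₁.take i.1)) (u₁.get i)
          (prodμ μ (u₁.drop (i.1 + 1)) * (prodμ μ u₂ * n))) +
      (∑ i : Fin u₂.length,
        f (m * prodμ μ u₁ * prodμ μ (u₂.take i.1)) (u₂.get i)
          (prodμ μ (u₂.drop (i.1 + 1)) * n)) := by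
  intro u₁
  induction u₁ with
  | nil =>
    intro m n u₂
    simp [show prodμ μ ([] : List A) = 1 from rfl]
  | cons a t ih =>
    intro m n u₂
    rw [List.cons_append]
    simp only [List.length_cons]
    rw [Fin.sum_univ_succ, Fin.sum_univ_succ]
    simp only [Fin.val_succ, List.get_eq_getElem, List.getElem_cons_succ,
      List.getElem_cons_zero, List.take_succ_cons, List.drop_succ_cons,
      List.take_zero, List.drop_zero, Fin.val_zero]
    simp only [show ∀ x : List A, prodμ μ (a :: x) = μ a * prodμ μ x from
      fun x => by simp [prodμ], ← mul_assoc]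
    simp only [List.get_eq_getElem] at ih
    rw [ih (m * μ a) n u₂]
    simp [show ∀ x y : List A, prodμ μ (x ++ y) = prodμ μ x * prodμ μ y from
      fun x y => by simp [prodμ], show ∀ x : List A, prodμ μ (a :: x) = μ a * prodμ μ x from
      fun x => by simp [prodμ], show prodμ μ ([] : List A) = 1 from rfl, mul_assoc, add_assoc]

lemma prodμ_append' {A M : Type} [Monoid M] (μ : A → M) (a b : List A) :
    prodμ μ (a ++ b) = prodμ μ a * prodμ μ b := by
  simp [prodμ]

lemma proBt_append {A M F : Type} [Monoid M] (μ : A → M) (lam : M → A → M → F)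
    (lamf : F → M → A → M → ℕ) (m m' m'' : M) (u₁ u₂ w : List A) :
    proBt μ lam lamf m (u₁ ++ u₂) m' w m'' =
      proBt μ lam lamf m u₁ (prodμ μ u₂ * m') w m'' +
      proBt μ lam lamf (m * prodμ μ u₁) u₂ m' w m'' := by
  have h := sum_split μ
    (fun x a y => ∑ j : Fin w.length,
      lamf (lam (m * prodμ μ (u₁ ++ u₂) * m' * prodμ μ (w.take j.1)) (w.get j)
          (prodμ μ (w.drop (j.1 + 1)) * m'')) x a (y * prodμ μ (w.take (j.1 + 1))))
    u₁ m m' u₂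
  simp only [proBt]
  simp only [prodμ_append', mul_assoc] at h ⊢
  exact h

lemma prodμ_replicate {A M : Type} [Monoid M] (μ : A → M) (v : List A) :
    ∀ Z : ℕ, prodμ μ (List.flatten (List.replicate Z v)) = prodμ μ v ^ Z := by
  intro Z
  induction Z with
  | zero => simp [prodμ]
  | succ Z ih => rw [List.replicate_succ, List.flatten_cons, prodμ_append', ih, pow_succ']

lemma pow_idem {M : Type} [Monoid M] {e : M} (he : e * e = e) :
    ∀ Z : ℕ, 1 ≤ Z → e ^ Z = e := by
  intro Z hZ
  induction Z with
  | zero => omega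
  | succ Z ih =>
    rcases Nat.eq_or_lt_of_le hZ with h | h
    · simp [← h]
    · rw [pow_succ, ih (by omega), he]

theorem production_iterated_idempotent_left {A M F : Type} [Monoid M]
    (μ : A → M) (lam : M → A → M → F) (lamf : F → M → A → M → ℕ)
    (m m' m'' : M) (v w : List A) (hv : v ≠ []) (hw : w ≠ [])
    (he : prodμ μ v * prodμ μ v = prodμ μ v) :
    ∀ Z : ℕ, 2 ≤ Z →
      proBt μ lam lamf m (List.flatten (List.replicate Z v)) m' w m'' =
      proBt μ lam lamf m v (prodμ μ v * m') w m'' +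
      proBt μ lam lamf (m * prodμ μ v) v m' w m'' +
      (Z - 2) * proBt μ lam lamf (m * prodμ μ v) v (prodμ μ v * m') w m'' := by
  suffices h : ∀ Z : ℕ, 2 ≤ Z → ∀ m : M,
      proBt μ lam lamf m (List.flatten (List.replicate Z v)) m' w m'' =
      proBt μ lam lamf m v (prodμ μ v * m') w m'' +
      proBt μ lam lamf (m * prodμ μ v) v m' w m'' +
      (Z - 2) * proBt μ lam lamf (m * prodμ μ v) v (prodμ μ v * m') w m'' by
    intro Z hZ; exact h Z hZ m
  intro Z hZ
  induction Z, hZ using Nat.le_induction with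
  | base =>
    intro m
    rw [show List.flatten (List.replicate 2 v) = v ++ v by
      simp [List.replicate_succ]]
    rw [proBt_append]
    simp
  | succ Z hZ ih =>
    intro m
    rw [show List.flatten (List.replicate (Z + 1) v) = v ++ List.flatten (List.replicate Z v) by
      simp [List.replicate_succ]]
    rw [proBt_append, prodμ_replicate, pow_idem he Z (by omega), ih (m * prodμ μ v)]
    rw [show m * prodμ μ v * prodμ μ v = m * prodμ μ v by rw [mul_assoc, he]]
    obtain ⟨k, rfl⟩ : ∃ k, Z = k + 2 := ⟨Z - 2, by omega⟩
    simp only [show k + 2 - 2 = k from rfl, show k + 2 + 1 - 2 = k + 1 from rfl]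
    ring
end

section
/- Suppose G : ℕ⁴ → ℕ and H : ℕ³ → ℕ satisfy: (a) there is a polynomial P : ℕ² → ℕ with G(X,Y,X',Y') = P(X+X', Y+Y') for all X,Y,X',Y' ≥ 2; (b) there is a polynomial Q(Z₁,Z₂,Z₃) with no monomials divisible by Z₁Z₂, Z₁Z₃, or Z₂Z₃, and constants a, b, c ∈ ℕ with H(Z₁,Z₂,Z₃) = Q(Z₁,Z₂,Z₃) + a·Z₁Z₂ + b·Z₁Z₃ + c·Z₂Z₃ for all Z₁,Z₂,Z₃ ≥ 4; and (c) for some ω ≥ 1 and all T₁,T₂,T'₂ ≥ 4, H(ωT₁, ωT₂, ωT'₂) = G(T₁, T₂, 2, T'₂). Then a = b. -/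
open scoped BigOperators

/-- Identification of cross coefficients: if `G` depends polynomially only on
`X + X'` and `Y + Y'`, `H` is a polynomial whose only mixed monomials are
`a·Z₁Z₂ + b·Z₁Z₃ + c·Z₂Z₃`, and `H(ωT₁, ωT₂, ωT₂') = G(T₁, T₂, 2, T₂')`,
then `a = b`. -/
theorem cross_coefficients_eq
    (G : ℕ → ℕ → ℕ → ℕ → ℕ) (H : ℕ → ℕ → ℕ → ℕ)
    (P : MvPolynomial (Fin 2) ℕ) (Q : MvPolynomial (Fin 3) ℕ)
    (a b c ω : ℕ) (hω : 1 ≤ ω)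
    (hG : ∀ X Y X' Y' : ℕ, 2 ≤ X → 2 ≤ Y → 2 ≤ X' → 2 ≤ Y' →
      G X Y X' Y' = MvPolynomial.eval (![X + X', Y + Y']) P)
    (hQ : ∀ d ∈ Q.support,
      (d 0 = 0 ∧ d 1 = 0) ∨ (d 0 = 0 ∧ d 2 = 0) ∨ (d 1 = 0 ∧ d 2 = 0))
    (hH : ∀ Z₁ Z₂ Z₃ : ℕ, 4 ≤ Z₁ → 4 ≤ Z₂ → 4 ≤ Z₃ →
      H Z₁ Z₂ Z₃ = MvPolynomial.eval (![Z₁, Z₂, Z₃]) Q +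
        a * (Z₁ * Z₂) + b * (Z₁ * Z₃) + c * (Z₂ * Z₃))
    (hc : ∀ T₁ T₂ T₂' : ℕ, 4 ≤ T₁ → 4 ≤ T₂ → 4 ≤ T₂' →
      H (ω * T₁) (ω * T₂) (ω * T₂') = G T₁ T₂ 2 T₂') :
    a = b := by
  -- Q splits into single-variable parts, so this "swap 2↔3 at two values of z₁" identity holds
  have swap : ∀ z z' u v : ℕ,
      MvPolynomial.eval ![z, u, v] Q + MvPolynomial.eval ![z', v, u] Q =
      MvPolynomial.eval ![z', u, v] Q + MvPolynomial.eval ![z, v, u] Q := by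
    intro z z' u v
    simp only [MvPolynomial.eval_eq']
    rw [← Finset.sum_add_distrib, ← Finset.sum_add_distrib]
    apply Finset.sum_congr rfl
    intro d hd
    have h3 : ∀ x : Fin 3 → ℕ, ∏ i, x i ^ d i = x 0 ^ d 0 * (x 1 ^ d 1 * x 2 ^ d 2) := by
      intro x; rw [Fin.prod_univ_three]; ring
    rcases hQ d hd with ⟨h0, h1⟩ | ⟨h0, h1⟩ | ⟨h0, h1⟩ <;>
      simp only [h3, h0, h1, pow_zero, one_mul, mul_one,
        Matrix.cons_val_zero, Matrix.cons_val_one, Matrix.head_cons,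
        Matrix.cons_val_two, Matrix.tail_cons] <;> ring
  have h4 : ∀ t : ℕ, 4 ≤ t → 4 ≤ ω * t := fun t ht =>
    le_trans ht (Nat.le_mul_of_pos_left t hω)
  have g1 : G 4 5 2 4 = G 4 4 2 5 := by
    rw [hG 4 5 2 4 (by norm_num) (by norm_num) (by norm_num) (by norm_num),
      hG 4 4 2 5 (by norm_num) (by norm_num) (by norm_num) (by norm_num)]
  have g2 : G 5 5 2 4 = G 5 4 2 5 := by
    rw [hG 5 5 2 4 (by norm_num) (by norm_num) (by norm_num) (by norm_num),
      hG 5 4 2 5 (by norm_num) (by norm_num) (by norm_num) (by norm_num)]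
  have e1 : H (ω * 4) (ω * 5) (ω * 4) = H (ω * 4) (ω * 4) (ω * 5) := by
    rw [hc 4 5 4 (by norm_num) (by norm_num) (by norm_num),
      hc 4 4 5 (by norm_num) (by norm_num) (by norm_num), g1]
  have e2 : H (ω * 5) (ω * 5) (ω * 4) = H (ω * 5) (ω * 4) (ω * 5) := by
    rw [hc 5 5 4 (by norm_num) (by norm_num) (by norm_num),
      hc 5 4 5 (by norm_num) (by norm_num) (by norm_num), g2]
  rw [hH _ _ _ (h4 4 le_rfl) (h4 5 (by norm_num)) (h4 4 le_rfl),
    hH _ _ _ (h4 4 le_rfl) (h4 4 le_rfl) (h4 5 (by norm_num))] at e1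
  rw [hH _ _ _ (h4 5 (by norm_num)) (h4 5 (by norm_num)) (h4 4 le_rfl),
    hH _ _ _ (h4 5 (by norm_num)) (h4 4 le_rfl) (h4 5 (by norm_num))] at e2
  have hs := swap (ω * 4) (ω * 5) (ω * 5) (ω * 4)
  set A := MvPolynomial.eval ![ω * 4, ω * 5, ω * 4] Q with hA
  set B := MvPolynomial.eval ![ω * 4, ω * 4, ω * 5] Q with hB
  set C := MvPolynomial.eval ![ω * 5, ω * 5, ω * 4] Q with hC
  set D := MvPolynomial.eval ![ω * 5, ω * 4, ω * 5] Q with hD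
  have key : a * (ω * ω) = b * (ω * ω) := by nlinarith [e1, e2, hs]
  have hw : 0 < ω * ω := Nat.mul_pos hω hω
  exact Nat.eq_of_mul_eq_mul_right hw key
end
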